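/- For elements γ, δ of I∞↗(ℕ) the following conditions are equivalent: (i) there exists an idempotent ε of I∞↗(ℕ) with γ * ε = δ * ε; (ii) there exists an idempotent ε of I∞↗(ℕ) with ε * γ = ε * δ; (iii) there exists an idempotent ε of the subsemigroup C = C_ℕ(α,β) with ε * γ = ε * δ; (iv) there exists an idempotent ε of C with γ * ε = δ * ε; (v) there is a positive integer i such that the restrictions of the partial maps γ and δ to {i, i+1, i+2, …} coincide. -/

import Mathlib

/-!
An idempotent of `I∞↗(ℕ)` is the identity `ε_s` of a cofinite set `s`. Multiplying by `ε_s` on the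
left restricts a partial bijection to `s`; multiplying on the right restricts it to the preimage
of `s`. A partial bijection pulls cofinite sets back to cofinite sets and pushes finite sets to
finite sets, so both kinds of agreement come down to agreement on some cofinite set, that is,
on a final segment `{i, i+1, …}`. For `i ≥ 1` the identity of that segment is `βⁱαⁱ`, which lies in `C`.
-/

open Set

/-- Cofinite monotone partial bijections of `ℕ`. -/
def IsCMPB (e : PartialEquiv ℕ ℕ) : Prop :=
  e.sourceᶜ.Finite ∧ e.targetᶜ.Finite ∧
    ∀ ⦃m n : ℕ⦄, m ∈ e.source → n ∈ e.source → m < n → e m < e n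

lemma IsCMPB.symm {e : PartialEquiv ℕ ℕ} (he : IsCMPB e) : IsCMPB e.symm := by
  obtain ⟨h1, h2, h3⟩ := he
  refine ⟨by simpa using h2, by simpa using h1, ?_⟩
  intro m n hm hn hmn
  have hm' : e.symm m ∈ e.source := e.map_target (by simpa using hm)
  have hn' : e.symm n ∈ e.source := e.map_target (by simpa using hn)
  have hEm : e (e.symm m) = m := e.right_inv hm
  have hEn : e (e.symm n) = n := e.right_inv hn
  rcases lt_trichotomy (e.symm m) (e.symm n) with h | h | h
  · exact h
  · exfalso
    have : m = n := by rw [← hEm, ← hEn, h]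
    omega
  · exfalso
    have := h3 hn' hm' h
    rw [hEm, hEn] at this
    omega

private lemma trans_source_compl_finite {e f : PartialEquiv ℕ ℕ}
    (he : e.sourceᶜ.Finite) (hf : f.sourceᶜ.Finite) : ((e.trans f).source)ᶜ.Finite := by
  rw [PartialEquiv.trans_source]
  have hT : (e.source ∩ e ⁻¹' f.sourceᶜ).Finite := by
    apply Set.Finite.of_finite_image ?_ (e.injOn.mono inter_subset_left)
    apply hf.subset
    rintro _ ⟨x, ⟨_, hx2⟩, rfl⟩
    exact hx2
  apply (he.union hT).subset
  intro x hx
  simp only [mem_compl_iff, mem_inter_iff, not_and_or] at hx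
  by_cases h : x ∈ e.source
  · rcases hx with h' | h'
    · exact absurd h h'
    · exact Or.inr ⟨h, h'⟩
  · exact Or.inl h

lemma IsCMPB.trans {e f : PartialEquiv ℕ ℕ} (he : IsCMPB e) (hf : IsCMPB f) :
    IsCMPB (e.trans f) := by
  refine ⟨trans_source_compl_finite he.1 hf.1, ?_, ?_⟩
  · have h : (((e.trans f).symm).source)ᶜ.Finite := by
      rw [PartialEquiv.trans_symm_eq_symm_trans_symm]
      exact trans_source_compl_finite (by simpa using hf.2.1) (by simpa using he.2.1)
    simpa using h
  · intro m n hm hn hmn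
    rw [PartialEquiv.trans_source] at hm hn
    show f (e m) < f (e n)
    exact hf.2.2 hm.2 hn.2 (he.2.2 hm.1 hn.1 hmn)

lemma isCMPB_congr {e e' : PartialEquiv ℕ ℕ} (h : e ≈ e') : IsCMPB e ↔ IsCMPB e' := by
  constructor <;> intro ⟨h1, h2, h3⟩
  · refine ⟨(PartialEquiv.EqOnSource.source_eq h) ▸ h1, (PartialEquiv.EqOnSource.target_eq h) ▸ h2, ?_⟩
    intro m n hm hn hmn
    rw [← (PartialEquiv.EqOnSource.source_eq h)] at hm hn
    rw [← (PartialEquiv.EqOnSource.eqOn h) hm, ← (PartialEquiv.EqOnSource.eqOn h) hn]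
    exact h3 hm hn hmn
  · refine ⟨(PartialEquiv.EqOnSource.source_eq h) ▸ h1, (PartialEquiv.EqOnSource.target_eq h) ▸ h2, ?_⟩
    intro m n hm hn hmn
    rw [(PartialEquiv.EqOnSource.eqOn h) hm, (PartialEquiv.EqOnSource.eqOn h) hn]
    exact h3 ((PartialEquiv.EqOnSource.source_eq h) ▸ hm) ((PartialEquiv.EqOnSource.source_eq h) ▸ hn) hmn

/-- The type of partial bijections of `ℕ` up to equality on the source. -/
abbrev PEQ : Type := Quotient (PartialEquiv.eqOnSourceSetoid (α := ℕ) (β := ℕ))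

instance : Mul PEQ :=
  ⟨Quotient.map₂ PartialEquiv.trans fun _ _ h _ _ h' => PartialEquiv.EqOnSource.trans' h h'⟩

lemma PEQ.mk_mul (e f : PartialEquiv ℕ ℕ) : (⟦e⟧ * ⟦f⟧ : PEQ) = ⟦e.trans f⟧ := rfl

instance : Semigroup PEQ where
  mul_assoc a b c := by
    induction a using Quotient.inductionOn with | h a =>
    induction b using Quotient.inductionOn with | h b =>
    induction c using Quotient.inductionOn with | h c =>
    simp only [PEQ.mk_mul, PartialEquiv.trans_assoc]

/-- The property of being a cofinite monotone partial bijection, on `PEQ`. -/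
def PEQ.IsGood : PEQ → Prop :=
  Quotient.lift IsCMPB fun _ _ h => propext (isCMPB_congr h)

lemma PEQ.IsGood.mul {a b : PEQ} (ha : a.IsGood) (hb : b.IsGood) : (a * b).IsGood := by
  induction a using Quotient.inductionOn with | h a =>
  induction b using Quotient.inductionOn with | h b =>
  exact IsCMPB.trans ha hb

/-- The semigroup `I∞↗(ℕ)` of cofinite monotone partial bijections of `ℕ`
(partial bijections being identified when they have the same source and coincide there). -/
def Imon : Type := {q : PEQ // q.IsGood}

instance : Mul Imon := ⟨fun a b => ⟨a.1 * b.1, a.2.mul b.2⟩⟩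

instance : Semigroup Imon where
  mul_assoc a b c := Subtype.ext (mul_assoc a.1 b.1 c.1)

/-- The underlying symmetrization (inverse partial bijection), on `PEQ`. -/
def PEQ.symm : PEQ → PEQ := Quotient.map PartialEquiv.symm fun _ _ h => PartialEquiv.EqOnSource.symm' h

lemma PEQ.IsGood.symm {a : PEQ} (ha : a.IsGood) : a.symm.IsGood := by
  induction a using Quotient.inductionOn with | h a =>
  exact IsCMPB.symm ha

/-- The inverse in the inverse semigroup `I∞↗(ℕ)`. -/
instance : Inv Imon := ⟨fun a => ⟨a.1.symm, a.2.symm⟩⟩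

/-- The source (domain) of an element of `PEQ`. -/
def PEQ.source : PEQ → Set ℕ :=
  Quotient.lift (fun e => e.source) fun _ _ h => (PartialEquiv.EqOnSource.source_eq h)

/-- The target (range) of an element of `PEQ`. -/
def PEQ.target : PEQ → Set ℕ :=
  Quotient.lift (fun e => e.target) fun _ _ h => (PartialEquiv.EqOnSource.target_eq h)

/-- The source (domain) of a cofinite monotone partial bijection of `ℕ`. -/
def Imon.source (a : Imon) : Set ℕ := a.1.source

/-- The target (range) of a cofinite monotone partial bijection of `ℕ`. -/
def Imon.target (a : Imon) : Set ℕ := a.1.target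

/-- The graph of an element of `PEQ`: pairs `(x, y)` with `x` in the source mapped to `y`. -/
def PEQ.graph : PEQ → Set (ℕ × ℕ) :=
  Quotient.lift (fun e => {p : ℕ × ℕ | p.1 ∈ e.source ∧ e p.1 = p.2}) fun e e' h => by
    ext p
    simp only [mem_setOf_eq]
    constructor
    · rintro ⟨h1, h2⟩
      exact ⟨(PartialEquiv.EqOnSource.source_eq h) ▸ h1, by rw [← (PartialEquiv.EqOnSource.eqOn h) h1]; exact h2⟩
    · rintro ⟨h1, h2⟩
      refine ⟨(PartialEquiv.EqOnSource.source_eq h) ▸ h1, ?_⟩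
      rw [(PartialEquiv.EqOnSource.eqOn h) ((PartialEquiv.EqOnSource.source_eq h) ▸ h1 : p.1 ∈ e.source)]
      exact h2

/-- The graph of a cofinite monotone partial bijection of `ℕ`. -/
def Imon.graph (a : Imon) : Set (ℕ × ℕ) := a.1.graph

/-- The natural partial order on idempotents: `ε ≤ ι` iff `ε * ι = ι * ε = ε`. -/
def idemLE (ε ι : Imon) : Prop := ε * ι = ε ∧ ι * ε = ε

/-- The everywhere-defined partial bijection `n ↦ n + 1`. -/
def alphaPE : PartialEquiv ℕ ℕ where
  toFun n := n + 1
  invFun n := n - 1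
  source := Set.univ
  target := {n : ℕ | 1 ≤ n}
  map_source' n _ := Nat.le_add_left 1 n
  map_target' _ _ := trivial
  left_inv' n _ := by show n + 1 - 1 = n; omega
  right_inv' n hn := by
    simp only [Set.mem_setOf_eq] at hn
    show n - 1 + 1 = n
    omega

lemma alphaPE_good : IsCMPB alphaPE := by
  refine ⟨by simp [alphaPE], ?_, ?_⟩
  · apply (Set.finite_singleton 0).subset
    intro n hn
    simp only [alphaPE, mem_compl_iff, mem_setOf_eq, not_le] at hn
    simp only [mem_singleton_iff]
    omega
  · intro m n _ _ h
    show m + 1 < n + 1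
    omega

/-- The generator `α : n ↦ n + 1` of the bicyclic subsemigroup. -/
def aGen : Imon := ⟨⟦alphaPE⟧, alphaPE_good⟩

/-- The generator `β : n ↦ n - 1` (with source `{n | 1 ≤ n}`) of the bicyclic subsemigroup. -/
def bGen : Imon := aGen⁻¹

/-- The bicyclic subsemigroup `C_ℕ(α, β)` of `I∞↗(ℕ)`, generated by `α` and `β`. -/
def Cbic : Subsemigroup Imon := Subsemigroup.closure {aGen, bGen}

namespace PartialEquiv

variable {α β : Type*}

theorem ofSet_trans (s : Set α) (e : PartialEquiv α β) : (ofSet s).trans e = e.restr s :=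
  PartialEquiv.ext (fun _ => rfl) (fun _ => rfl) (by simp [trans_source, inter_comm])

theorem eqOnSource_ofSet_source_of_trans_self {e : PartialEquiv α α} (h : e.trans e ≈ e) :
    e ≈ ofSet e.source := by
  refine ⟨rfl, fun x hx => ?_⟩
  have hex : e x ∈ e.source := ((h.source_eq ▸ hx : x ∈ (e.trans e).source)).2
  exact e.injOn hex hx (h.eqOn (h.source_eq ▸ hx))

theorem restr_eqOnSource_restr_iff {e e' : PartialEquiv α β} {s : Set α} :
    e.restr s ≈ e'.restr s ↔
      ∀ x ∈ s, ∀ y, (x ∈ e.source ∧ e x = y ↔ x ∈ e'.source ∧ e' x = y) := by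
  constructor
  · intro h x hxs y
    have hsrc : x ∈ e.source ↔ x ∈ e'.source := by
      simpa [hxs] using Set.ext_iff.1 h.source_eq x
    constructor
    · rintro ⟨hx, rfl⟩
      exact ⟨hsrc.1 hx, (h.eqOn ⟨hx, hxs⟩).symm⟩
    · rintro ⟨hx, rfl⟩
      exact ⟨hsrc.2 hx, h.eqOn ⟨hsrc.2 hx, hxs⟩⟩
  · intro h
    refine ⟨Set.ext fun x => ?_, fun x hx => ((h x hx.2 (e x)).1 ⟨hx.1, rfl⟩).2.symm⟩
    simp only [restr_source, mem_inter_iff, and_congr_left_iff]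
    exact fun hxs => ⟨fun hx => ((h x hxs _).1 ⟨hx, rfl⟩).1,
      fun hx => ((h x hxs _).2 ⟨hx, rfl⟩).1⟩

theorem restr_eqOnSource_restr_of_subset {e e' : PartialEquiv α β} {s t : Set α} (hst : s ⊆ t)
    (h : e.restr t ≈ e'.restr t) : e.restr s ≈ e'.restr s :=
  restr_eqOnSource_restr_iff.2 fun x hx => restr_eqOnSource_restr_iff.1 h x (hst hx)

theorem trans_ofSet_eqOnSource_of_subset {e e' : PartialEquiv α β} {s t : Set β} (hst : s ⊆ t)
    (h : e.trans (ofSet t) ≈ e'.trans (ofSet t)) : e.trans (ofSet s) ≈ e'.trans (ofSet s) := by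
  have hts : (ofSet t).trans (ofSet s) = ofSet s :=
    PartialEquiv.ext (fun _ => rfl) (fun _ => rfl) (by simpa [trans_source] using hst)
  rw [← hts, ← trans_assoc, ← trans_assoc]
  exact h.trans' (Setoid.refl _)

theorem finite_source_inter_preimage (e : PartialEquiv α β) {s : Set β} (hs : s.Finite) :
    (e.source ∩ e ⁻¹' s).Finite :=
  Set.Finite.of_finite_image (hs.subset (image_subset_iff.2 inter_subset_right))
    (e.injOn.mono inter_subset_left)

theorem exists_restr_eqOnSource_of_trans_ofSet {e e' : PartialEquiv α β} {s : Set β}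
    (hs : sᶜ.Finite) (h : e.trans (ofSet s) ≈ e'.trans (ofSet s)) :
    ∃ t : Set α, tᶜ.Finite ∧ e.restr t ≈ e'.restr t := by
  set t := (e.source ∩ e ⁻¹' sᶜ ∪ e'.source ∩ e' ⁻¹' sᶜ)ᶜ
  refine ⟨t, ?_, ?_⟩
  · rw [compl_compl]
    exact (e.finite_source_inter_preimage hs).union (e'.finite_source_inter_preimage hs)
  have restr_eq {f : PartialEquiv α β} (hf : ∀ x ∈ f.source, f x ∉ s → x ∉ t) :
      (f.trans (ofSet s)).restr t = f.restr t := by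
    rw [← restr_trans, trans_ofSet]
    refine restr_eq_of_source_subset fun x hx => ?_
    by_contra hxs
    exact hf x hx.1 hxs hx.2
  rw [← restr_eq (f := e) fun x hx hxs ht => ht (Or.inl ⟨hx, hxs⟩),
    ← restr_eq (f := e') fun x hx hxs ht => ht (Or.inr ⟨hx, hxs⟩)]
  exact h.restr _

theorem exists_trans_ofSet_eqOnSource_of_restr {e e' : PartialEquiv α β} {t : Set α}
    (ht : tᶜ.Finite) (h : e.restr t ≈ e'.restr t) :
    ∃ s : Set β, sᶜ.Finite ∧ e.trans (ofSet s) ≈ e'.trans (ofSet s) := by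
  set s := (e '' tᶜ ∪ e' '' tᶜ)ᶜ
  refine ⟨s, ?_, ?_⟩
  · rw [compl_compl]
    exact (ht.image e).union (ht.image e')
  have restr_eq {f : PartialEquiv α β} (hf : ∀ x ∉ t, f x ∉ s) :
      (f.restr t).trans (ofSet s) = f.trans (ofSet s) := by
    rw [restr_trans]
    refine restr_eq_of_source_subset fun x hx => ?_
    by_contra hxt
    exact hf x hxt hx.2
  rw [← restr_eq (f := e) fun x hxt hs => hs (Or.inl ⟨x, hxt, rfl⟩),
    ← restr_eq (f := e') fun x hxt hs => hs (Or.inr ⟨x, hxt, rfl⟩)]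
  exact h.trans' (Setoid.refl _)

end PartialEquiv

theorem Nat.exists_pos_Ici_subset_of_finite_compl {t : Set ℕ} (ht : tᶜ.Finite) :
    ∃ i, 0 < i ∧ Ici i ⊆ t := by
  obtain ⟨b, hb⟩ := ht.bddAbove
  refine ⟨b + 1, b.succ_pos, fun x hx => ?_⟩
  by_contra hxt
  have : x ≤ b := hb hxt
  simp only [mem_Ici] at hx
  omega

theorem isCMPB_ofSet {s : Set ℕ} (hs : sᶜ.Finite) : IsCMPB (PartialEquiv.ofSet s) :=
  ⟨hs, hs, fun _ _ _ _ h => h⟩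

namespace Imon

open PartialEquiv

def mk (e : PartialEquiv ℕ ℕ) (he : IsCMPB e) : Imon := ⟨⟦e⟧, he⟩

@[elab_as_elim]
theorem ind {motive : Imon → Prop} (mk : ∀ e he, motive (mk e he)) (a : Imon) : motive a := by
  obtain ⟨q, hq⟩ := a
  induction q using Quotient.inductionOn with
  | h e => exact mk e hq

theorem mk_mul_mk {e f : PartialEquiv ℕ ℕ} (he : IsCMPB e) (hf : IsCMPB f) :
    mk e he * mk f hf = mk (e.trans f) (he.trans hf) := rfl

theorem mk_eq_mk {e f : PartialEquiv ℕ ℕ} {he : IsCMPB e} {hf : IsCMPB f} :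
    mk e he = mk f hf ↔ e ≈ f :=
  Subtype.mk_eq_mk.trans Quotient.eq

theorem mem_graph_mk {e : PartialEquiv ℕ ℕ} {he : IsCMPB e} {j k : ℕ} :
    (j, k) ∈ (mk e he).graph ↔ j ∈ e.source ∧ e j = k := Iff.rfl

def idOn (s : Set ℕ) (hs : sᶜ.Finite) : Imon := mk (ofSet s) (isCMPB_ofSet hs)

theorem idOn_mul_self (s : Set ℕ) (hs : sᶜ.Finite) : idOn s hs * idOn s hs = idOn s hs :=
  mk_eq_mk.2 ⟨by simp [trans_source], fun _ _ => rfl⟩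

theorem mul_self_eq_self_iff {ε : Imon} : ε * ε = ε ↔ ∃ s hs, ε = idOn s hs := by
  refine ⟨fun h => ?_, fun ⟨s, hs, hε⟩ => hε ▸ idOn_mul_self s hs⟩
  induction ε using Imon.ind with | mk e he => ?_
  rw [mk_mul_mk, mk_eq_mk] at h
  exact ⟨e.source, he.1, mk_eq_mk.2 (eqOnSource_ofSet_source_of_trans_self h)⟩

theorem idOn_mul_mk_eq_iff {s : Set ℕ} {hs : sᶜ.Finite} {g d : PartialEquiv ℕ ℕ}
    {hg : IsCMPB g} {hd : IsCMPB d} :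
    idOn s hs * mk g hg = idOn s hs * mk d hd ↔ g.restr s ≈ d.restr s := by
  rw [idOn, mk_mul_mk, mk_mul_mk, mk_eq_mk, ofSet_trans, ofSet_trans]

theorem idOn_Ici_mem_Cbic {i : ℕ} (hi : 0 < i) : idOn (Ici i) (by simp) ∈ Cbic := by
  have hα : aGen ∈ Cbic := Subsemigroup.subset_closure (by simp)
  have hβ : bGen ∈ Cbic := Subsemigroup.subset_closure (by simp)
  induction i, hi using Nat.le_induction with
  | base =>
    convert Subsemigroup.mul_mem _ hβ hα using 1
    exact mk_eq_mk.2 (Setoid.symm (symm_trans_self alphaPE))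
  | succ i hi ih =>
    convert Subsemigroup.mul_mem _ hβ (Subsemigroup.mul_mem _ ih hα) using 1
    refine mk_eq_mk.2 ⟨Set.ext fun x => ?_, fun x (hx : i + 1 ≤ x) => ?_⟩
    · change i + 1 ≤ x ↔ 1 ≤ x ∧ i ≤ x - 1 ∧ True
      rw [and_true]
      omega
    · change x = x - 1 + 1
      omega

theorem exists_graph_agree_iff {g d : PartialEquiv ℕ ℕ} {hg : IsCMPB g} {hd : IsCMPB d} :
    (∃ i : ℕ, 0 < i ∧ ∀ j k : ℕ, i ≤ j → ((j, k) ∈ (mk g hg).graph ↔ (j, k) ∈ (mk d hd).graph)) ↔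
      ∃ t : Set ℕ, tᶜ.Finite ∧ g.restr t ≈ d.restr t := by
  simp only [mem_graph_mk]
  constructor
  · rintro ⟨i, -, h⟩
    exact ⟨Ici i, by simp, restr_eqOnSource_restr_iff.2 fun j hj k => h j k hj⟩
  · rintro ⟨t, ht, h⟩
    obtain ⟨i, hi, hit⟩ := Nat.exists_pos_Ici_subset_of_finite_compl ht
    exact ⟨i, hi, fun j k hj => restr_eqOnSource_restr_iff.1 h j (hit hj) k⟩

end Imon

/-- the conditions defining the least group congruence on `I∞↗(ℕ)` are
equivalent: right/left multiplication by an idempotent of `I∞↗(ℕ)` or of the bicyclic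
subsemigroup `C = C_ℕ(α,β)` identifies `γ` and `δ`, iff `γ` and `δ` coincide on a final
segment `{i, i+1, i+2, …}` of `ℕ` (with `i > 0`). -/
theorem Imon_least_group_congruence (γ δ : Imon) :
    List.TFAE
      [∃ ε : Imon, ε * ε = ε ∧ γ * ε = δ * ε,
       ∃ ε : Imon, ε * ε = ε ∧ ε * γ = ε * δ,
       ∃ ε ∈ Cbic, ε * ε = ε ∧ ε * γ = ε * δ,
       ∃ ε ∈ Cbic, ε * ε = ε ∧ γ * ε = δ * ε,
       ∃ i : ℕ, 0 < i ∧ ∀ j k : ℕ, i ≤ j → ((j, k) ∈ γ.graph ↔ (j, k) ∈ δ.graph)] := by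
  induction γ using Imon.ind with | mk g hg => ?_
  induction δ using Imon.ind with | mk d hd => ?_
  rw [Imon.exists_graph_agree_iff]
  tfae_have 3 → 2 := fun ⟨ε, _, h⟩ => ⟨ε, h⟩
  tfae_have 4 → 1 := fun ⟨ε, _, h⟩ => ⟨ε, h⟩
  tfae_have 2 → 5 := by
    rintro ⟨ε, hε, h⟩
    obtain ⟨s, hs, rfl⟩ := Imon.mul_self_eq_self_iff.1 hε
    exact ⟨s, hs, Imon.idOn_mul_mk_eq_iff.1 h⟩
  tfae_have 1 → 5 := by
    rintro ⟨ε, hε, h⟩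
    obtain ⟨s, hs, rfl⟩ := Imon.mul_self_eq_self_iff.1 hε
    exact PartialEquiv.exists_restr_eqOnSource_of_trans_ofSet hs (Imon.mk_eq_mk.1 h)
  tfae_have 5 → 3 := by
    rintro ⟨t, ht, h⟩
    obtain ⟨i, hi, hit⟩ := Nat.exists_pos_Ici_subset_of_finite_compl ht
    exact ⟨_, Imon.idOn_Ici_mem_Cbic hi, Imon.idOn_mul_self _ _,
      Imon.idOn_mul_mk_eq_iff.2 (PartialEquiv.restr_eqOnSource_restr_of_subset hit h)⟩
  tfae_have 5 → 4 := by
    rintro ⟨t, ht, h⟩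
    obtain ⟨s, hs, h⟩ := PartialEquiv.exists_trans_ofSet_eqOnSource_of_restr ht h
    obtain ⟨i, hi, his⟩ := Nat.exists_pos_Ici_subset_of_finite_compl hs
    exact ⟨_, Imon.idOn_Ici_mem_Cbic hi, Imon.idOn_mul_self _ _,
      Imon.mk_eq_mk.2 (PartialEquiv.trans_ofSet_eqOnSource_of_subset his h)⟩
  tfae_finish
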